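/- Let V be a steplike potential with steps V₊, V₋ and threshold x_M, let z ∈ ℂ, and let r₊, r₋ ∈ ℂ satisfy r₊² = z − V₊ and r₋² = z − V₋. Suppose u₁ and u₂ are solutions of −u'' + V u = z u, and there are constants T₁, R₁, T₂, R₂ ∈ ℂ with: u₁(x) = T₁ e^{−i r₋ x} for all x ≤ −x_M and u₁(x) = e^{−i r₊ x} + R₁ e^{i r₊ x} for all x ≥ x_M; u₂(x) = T₂ e^{i r₋ x} for all x ≤ −x_M and u₂(x) = e^{−i r₊ x} + R₂ e^{i r₊ x} for all x ≥ x_M. Then r₋ T₁ T₂ = r₊ (R₂ − R₁). -/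

import Mathlib

/-!
The Wronskian `W = u₁ u₂' - u₁' u₂` of two solutions is constant: `u₁, u₂` are `C¹`, their
derivatives are Lipschitz on compacts because `(V - z) u` is locally bounded, so `W` is absolutely
continuous, and by the Lebesgue differentiation theorem `W' = u₁ (V - z) u₂ - (V - z) u₁ u₂ = 0`
almost everywhere. Left of `-x_M` the solutions are the plane waves `T₁ e^{-i r₋ x}`,
`T₂ e^{i r₋ x}`, whose Wronskian is `2 i r₋ T₁ T₂`; right of `x_M` it is `2 i r₊ (R₂ - R₁)`.
-/

open Complex MeasureTheory
open scoped Classical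

/-- `u` is a solution of `-u'' + V u = z u`: `u` is differentiable with continuous
derivative, and the derivative satisfies the integrated form of the ODE. -/
def IsSolution (V : ℝ → ℝ) (z : ℂ) (u : ℝ → ℂ) : Prop :=
  Differentiable ℝ u ∧ Continuous (deriv u) ∧
    ∀ x : ℝ, deriv u x = deriv u 0 + ∫ t in (0:ℝ)..x, ((V t : ℂ) - z) * u t

open Set Filter Topology

noncomputable section

def wronskian (u₁ u₂ : ℝ → ℂ) (x : ℝ) : ℂ := u₁ x * deriv u₂ x - deriv u₁ x * u₂ x

theorem Filter.EventuallyEq.wronskian_eq {u₁ u₂ v₁ v₂ : ℝ → ℂ} {x : ℝ}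
    (h₁ : u₁ =ᶠ[𝓝 x] v₁) (h₂ : u₂ =ᶠ[𝓝 x] v₂) : wronskian u₁ u₂ x = wronskian v₁ v₂ x := by
  simp only [wronskian, h₁.eq_of_nhds, h₂.eq_of_nhds, h₁.deriv_eq, h₂.deriv_eq]

def planeWave (r A B : ℂ) (x : ℝ) : ℂ := A * exp (-(I * r * x)) + B * exp (I * r * x)

theorem hasDerivAt_planeWave (r A B : ℂ) (x : ℝ) :
    HasDerivAt (planeWave r A B) (I * r * (B * exp (I * r * x) - A * exp (-(I * r * x)))) x := by
  have hlin : HasDerivAt (fun y : ℝ => I * r * y) (I * r) x := by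
    simpa using ((hasDerivAt_id (x : ℂ)).const_mul (I * r)).comp_ofReal
  exact ((hlin.fun_neg.cexp.const_mul A).add (hlin.cexp.const_mul B)).congr_deriv (by ring)

theorem wronskian_planeWave (r A₁ B₁ A₂ B₂ : ℂ) (x : ℝ) :
    wronskian (planeWave r A₁ B₁) (planeWave r A₂ B₂) x = 2 * I * r * (A₁ * B₂ - B₁ * A₂) := by
  have hexp : exp (-(I * r * x)) * exp (I * r * x) = 1 := by rw [← exp_add]; simp
  simp only [wronskian, (hasDerivAt_planeWave _ _ _ x).deriv, planeWave]
  linear_combination 2 * I * r * (A₁ * B₂ - B₁ * A₂) * hexp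

section Solutions

variable {V : ℝ → ℝ} {z : ℂ} {u u₁ u₂ : ℝ → ℂ}

theorem exists_norm_potential_sub_le (hVbdd : ∃ C : ℝ, ∀ x : ℝ, |V x| ≤ C) (z : ℂ) :
    ∃ C : ℝ, ∀ x, ‖(V x : ℂ) - z‖ ≤ C := by
  obtain ⟨C, hC⟩ := hVbdd
  refine ⟨C + ‖z‖, fun x => (norm_sub_le _ _).trans ?_⟩
  rw [norm_real, Real.norm_eq_abs]
  exact add_le_add_left (hC x) _

theorem locallyIntegrable_potential_sub_mul (hV : Measurable V)
    (hVbdd : ∃ C : ℝ, ∀ x : ℝ, |V x| ≤ C) (hu : Continuous u) :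
    LocallyIntegrable (fun t => ((V t : ℂ) - z) * u t) volume := by
  obtain ⟨C, hC⟩ := exists_norm_potential_sub_le hVbdd z
  have hmeas : AEStronglyMeasurable (fun t => (V t : ℂ) - z) :=
    ((measurable_ofReal.comp hV).sub measurable_const).aestronglyMeasurable
  refine LocallyIntegrable.mul_continuous hu (locallyIntegrable_iff.2 fun K hK => ?_)
  exact Measure.integrableOn_of_bounded hK.measure_lt_top.ne hmeas (ae_of_all _ hC)

namespace IsSolution

theorem deriv_sub_deriv (hV : Measurable V) (hVbdd : ∃ C : ℝ, ∀ x : ℝ, |V x| ≤ C)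
    (hu : IsSolution V z u) (x y : ℝ) :
    deriv u y - deriv u x = ∫ t in x..y, ((V t : ℂ) - z) * u t := by
  have hint (a b : ℝ) : IntervalIntegrable (fun t => ((V t : ℂ) - z) * u t) volume a b :=
    ((locallyIntegrable_potential_sub_mul hV hVbdd hu.1.continuous).integrableOn_isCompact
      isCompact_uIcc).intervalIntegrable
  rw [hu.2.2 x, hu.2.2 y, ← intervalIntegral.integral_interval_sub_left (hint 0 y) (hint 0 x)]
  ring

theorem ae_hasDerivAt_deriv (hV : Measurable V) (hVbdd : ∃ C : ℝ, ∀ x : ℝ, |V x| ≤ C)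
    (hu : IsSolution V z u) : ∀ᵐ x, HasDerivAt (deriv u) (((V x : ℂ) - z) * u x) x := by
  filter_upwards [LocallyIntegrable.ae_hasDerivAt_integral
    (locallyIntegrable_potential_sub_mul hV hVbdd hu.1.continuous)] with x hx
  rw [show deriv u = _ from funext hu.2.2]
  exact (hx 0).const_add _

theorem lipschitzOnWith_deriv (hV : Measurable V) (hVbdd : ∃ C : ℝ, ∀ x : ℝ, |V x| ≤ C)
    (hu : IsSolution V z u) (a b : ℝ) : ∃ K, LipschitzOnWith K (deriv u) (uIcc a b) := by
  obtain ⟨C, hC⟩ := exists_norm_potential_sub_le hVbdd z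
  obtain ⟨M, hM⟩ := (isCompact_uIcc (a := a) (b := b)).exists_bound_of_continuousOn
    hu.1.continuous.continuousOn
  refine ⟨_, LipschitzOnWith.of_dist_le' (K := C * M) fun x hx y hy => ?_⟩
  rw [dist_eq_norm, ← neg_sub, norm_neg, hu.deriv_sub_deriv hV hVbdd, Real.dist_eq, abs_sub_comm]
  refine intervalIntegral.norm_integral_le_of_norm_le_const fun t ht => ?_
  rw [norm_mul]
  exact mul_le_mul (hC t) (hM t (uIcc_subset_uIcc hx hy (uIoc_subset_uIcc ht)))
    (norm_nonneg _) ((norm_nonneg _).trans (hC t))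

theorem absolutelyContinuousOnInterval (hu : IsSolution V z u) (a b : ℝ) :
    AbsolutelyContinuousOnInterval u a b :=
  (contDiff_one_iff_deriv.2 ⟨hu.1, hu.2.1⟩).contDiffOn.absolutelyContinuousOnInterval

theorem absolutelyContinuousOnInterval_deriv (hV : Measurable V)
    (hVbdd : ∃ C : ℝ, ∀ x : ℝ, |V x| ≤ C) (hu : IsSolution V z u) (a b : ℝ) :
    AbsolutelyContinuousOnInterval (deriv u) a b :=
  (hu.lipschitzOnWith_deriv hV hVbdd a b).choose_spec.absolutelyContinuousOnInterval

theorem wronskian_eq (hV : Measurable V) (hVbdd : ∃ C : ℝ, ∀ x : ℝ, |V x| ≤ C)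
    (hu₁ : IsSolution V z u₁) (hu₂ : IsSolution V z u₂) (a b : ℝ) :
    wronskian u₁ u₂ a = wronskian u₁ u₂ b := by
  have hac : AbsolutelyContinuousOnInterval (wronskian u₁ u₂) a b :=
    ((hu₁.absolutelyContinuousOnInterval a b).fun_smul
      (hu₂.absolutelyContinuousOnInterval_deriv hV hVbdd a b)).sub
      ((hu₁.absolutelyContinuousOnInterval_deriv hV hVbdd a b).fun_smul
        (hu₂.absolutelyContinuousOnInterval a b))
  have hderiv : ∀ᵐ x, x ∈ uIcc a b → HasDerivAt (wronskian u₁ u₂) 0 x := by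
    filter_upwards [hu₁.ae_hasDerivAt_deriv hV hVbdd, hu₂.ae_hasDerivAt_deriv hV hVbdd]
      with x h₁ h₂ _
    exact (((hu₁.1 x).hasDerivAt.mul h₂).sub (h₁.mul (hu₂.1 x).hasDerivAt)).congr_deriv
      (by ring)
  obtain ⟨C, hC⟩ := hac.const_of_ae_hasDerivAt_zero hderiv
  rw [hC a left_mem_uIcc, hC b right_mem_uIcc]

end IsSolution

end Solutions

end

theorem reflection_difference_relation_general
    (V : ℝ → ℝ) (xM : ℝ)
    (hVmeas : Measurable V) (hVbdd : ∃ C : ℝ, ∀ x : ℝ, |V x| ≤ C)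
    (z rp rm : ℂ)
    (u₁ u₂ : ℝ → ℂ) (hu₁ : IsSolution V z u₁) (hu₂ : IsSolution V z u₂)
    (T₁ R₁ T₂ R₂ : ℂ)
    (hu₁L : ∀ x : ℝ, x ≤ -xM → u₁ x = T₁ * Complex.exp (-(Complex.I * rm * x)))
    (hu₁R : ∀ x : ℝ, xM ≤ x →
      u₁ x = Complex.exp (-(Complex.I * rp * x)) + R₁ * Complex.exp (Complex.I * rp * x))
    (hu₂L : ∀ x : ℝ, x ≤ -xM → u₂ x = T₂ * Complex.exp (Complex.I * rm * x))
    (hu₂R : ∀ x : ℝ, xM ≤ x →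
      u₂ x = Complex.exp (-(Complex.I * rp * x)) + R₂ * Complex.exp (Complex.I * rp * x)) :
    rm * T₁ * T₂ = rp * (R₂ - R₁) := by
  have hleft : wronskian u₁ u₂ (-xM - 1) = 2 * I * rm * (T₁ * T₂ - 0 * 0) := by
    rw [← wronskian_planeWave rm T₁ 0 0 T₂]
    refine EventuallyEq.wronskian_eq ?_ ?_ <;>
      filter_upwards [Iio_mem_nhds (show -xM - 1 < -xM by linarith)] with x (hx : x < -xM)
    · simp [planeWave, hu₁L x hx.le]
    · simp [planeWave, hu₂L x hx.le]
  have hright : wronskian u₁ u₂ (xM + 1) = 2 * I * rp * (1 * R₂ - R₁ * 1) := by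
    rw [← wronskian_planeWave rp 1 R₁ 1 R₂]
    refine EventuallyEq.wronskian_eq ?_ ?_ <;>
      filter_upwards [Ioi_mem_nhds (show xM < xM + 1 by linarith)] with x (hx : xM < x)
    · simp [planeWave, hu₁R x hx.le]
    · simp [planeWave, hu₂R x hx.le]
  have hconst := hu₁.wronskian_eq hVmeas hVbdd hu₂ (-xM - 1) (xM + 1)
  rw [hleft, hright] at hconst
  have h2I : (2 : ℂ) * I ≠ 0 := by simp
  refine mul_left_cancel₀ h2I ?_
  linear_combination hconst

theorem reflection_difference_relation
    (V : ℝ → ℝ) (Vp Vm xM : ℝ)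
    (hVmeas : Measurable V) (hVbdd : ∃ C : ℝ, ∀ x : ℝ, |V x| ≤ C)
    (hxM : 0 < xM)
    (hVp : ∀ x : ℝ, xM < x → V x = Vp)
    (hVm : ∀ x : ℝ, x < -xM → V x = Vm)
    (z rp rm : ℂ) (hrp : rp ^ 2 = z - (Vp : ℂ)) (hrm : rm ^ 2 = z - (Vm : ℂ))
    (u₁ u₂ : ℝ → ℂ) (hu₁ : IsSolution V z u₁) (hu₂ : IsSolution V z u₂)
    (T₁ R₁ T₂ R₂ : ℂ)
    (hu₁L : ∀ x : ℝ, x ≤ -xM → u₁ x = T₁ * Complex.exp (-(Complex.I * rm * x)))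
    (hu₁R : ∀ x : ℝ, xM ≤ x →
      u₁ x = Complex.exp (-(Complex.I * rp * x)) + R₁ * Complex.exp (Complex.I * rp * x))
    (hu₂L : ∀ x : ℝ, x ≤ -xM → u₂ x = T₂ * Complex.exp (Complex.I * rm * x))
    (hu₂R : ∀ x : ℝ, xM ≤ x →
      u₂ x = Complex.exp (-(Complex.I * rp * x)) + R₂ * Complex.exp (Complex.I * rp * x)) :
    rm * T₁ * T₂ = rp * (R₂ - R₁) :=
  reflection_difference_relation_general V xM hVmeas hVbdd z rp rm u₁ u₂ hu₁ hu₂ T₁ R₁ T₂ R₂ hu₁L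
    hu₁R hu₂L hu₂R
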